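/- (Uniqueness of quines) If t is a normal form of the rewrite system R over {d, e, +, ·} such that t·e ≡ t, then t = e or t = d·d. -/

import Mathlib

/-- Ground terms over constants d, e with binary operations + (add) and · (app). -/
inductive Tm : Type
  | d : Tm
  | e : Tm
  | add : Tm → Tm → Tm
  | app : Tm → Tm → Tm
  deriving DecidableEq

open Tm

/-- Root rewrite steps: instances of the oriented rules. -/
inductive Root : Tm → Tm → Prop
  | addE (x) : Root (add x e) x
  | eAdd (x) : Root (add e x) x
  | assoc (x y z) : Root (add (add x y) z) (add x (add y z))
  | appAdd (x y z) : Root (app (add x y) z) (app y (app x z))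
  | appD (x y) : Root (app (app d x) y) (app x (add y x))
  | appE (x) : Root (app e x) x
  | dE : Root (app d e) e

/-- One rewrite step: a root step applied at some subterm position. -/
inductive Step : Tm → Tm → Prop
  | root {t u} : Root t u → Step t u
  | addL {t t' u} : Step t t' → Step (add t u) (add t' u)
  | addR {t u u'} : Step u u' → Step (add t u) (add t u')
  | appL {t t' u} : Step t t' → Step (app t u) (app t' u)
  | appR {t u u'} : Step u u' → Step (app t u) (app t u')

/-- Zero or more rewrite steps. -/
def Steps : Tm → Tm → Prop := Relation.ReflTransGen Step

/-- A normal form is a term to which no rule applies. -/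
def NormalForm (t : Tm) : Prop := ∀ u, ¬ Step t u

/-- Provable equality in the equational theory (reflexive symmetric transitive
congruence closure of the rule instances). -/
def TermEq : Tm → Tm → Prop := Relation.EqvGen Step

/-!
The system terminates, since every rule decreases `weight`, which is exponential in the left
argument of `·`, and its critical pairs are joinable; by Newman's lemma it is confluent, so
`t·e ≡ t` for a normal form `t` means that `t·e` normalises to `t`.

The normal forms are `e`, `d`, `d·q` with `q ≠ e`, and right-nested sums of these. For normal
`X` and `Y` the normal form of `X·Y` is computed by the recursion `(a+b)·Y = b·(a·Y)`,
`(d·q)·Y = q·(Y+q)`, ending at `e·Y = Y`, `d·e = e` or the normal `d·Y`. Along it the number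
of `d`s strictly grows when `X, Y ≠ e`. Hence a result that is a sum must be `Y` itself, and a
result `d·Z` either is `d·Y` with `X = d` or has more `d`s in `Z` than in `Y`. The first fact
excludes quines `a+b`; for `t = d·v` we get `nf (v·v) = d·v`, and the second forces `v = d`.
-/

open Relation

theorem Relation.newman {α : Type*} {r : α → α → Prop} (hwf : WellFounded (flip r))
    (hlc : ∀ a b c, r a b → r a c → Join (ReflTransGen r) b c) {a b c : α}
    (hab : ReflTransGen r a b) (hac : ReflTransGen r a c) : Join (ReflTransGen r) b c := by
  induction a using hwf.induction generalizing b c with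
  | _ a ih =>
  rcases hab.cases_head with rfl | ⟨b₁, hab₁, hb₁b⟩
  · exact ⟨c, hac, .refl⟩
  rcases hac.cases_head with rfl | ⟨c₁, hac₁, hc₁c⟩
  · exact ⟨b, .refl, .head hab₁ hb₁b⟩
  obtain ⟨m, hb₁m, hc₁m⟩ := hlc _ _ _ hab₁ hac₁
  obtain ⟨n, hbn, hmn⟩ := ih b₁ hab₁ hb₁b hb₁m
  obtain ⟨k, hck, hnk⟩ := ih c₁ hac₁ hc₁c (hc₁m.trans hmn)
  exact ⟨k, hbn.trans hnk, hck⟩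

def weight : Tm → ℕ
  | d => 2
  | e => 2
  | add x y => 2 * weight x + weight y
  | app x y => 2 ^ weight x * weight y

lemma two_le_weight (t : Tm) : 2 ≤ weight t := by
  induction t with
  | d | e => rfl
  | add x y _ _ => simp only [weight]; omega
  | app x y _ ihy => exact ihy.trans (Nat.le_mul_of_pos_left _ (by positivity))

lemma weight_lt_weight_app_right (x y : Tm) : weight y < weight (app x y) :=
  calc weight y < 2 * weight y := by linarith [two_le_weight y]
    _ ≤ 2 ^ weight x * weight y := by
      gcongr
      calc 2 = 2 ^ 1 := rfl
        _ ≤ 2 ^ weight x := Nat.pow_le_pow_right two_pos (by linarith [two_le_weight x])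

lemma weight_lt_of_root {t u : Tm} (h : Root t u) : weight u < weight t := by
  cases h with
  | addE | eAdd | appE => simp only [weight]; linarith [two_le_weight u]
  | assoc x y z => simp only [weight]; linarith [two_le_weight x]
  | dE => simp [weight]
  | appAdd x y z =>
    simp only [weight]
    rw [← mul_assoc, ← pow_add]
    exact Nat.mul_lt_mul_of_pos_right
      (Nat.pow_lt_pow_right one_lt_two (by linarith [two_le_weight x]))
      (by linarith [two_le_weight z])
  | appD x y =>
    simp only [weight]
    set a := weight x
    set b := weight y
    set A := 2 ^ a
    have ha : a < A := Nat.lt_two_pow_self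
    have hb : 2 ≤ b := two_le_weight y
    have hA : 4 ≤ A := by
      calc 4 = 2 ^ 2 := rfl
        _ ≤ A := Nat.pow_le_pow_right two_pos (two_le_weight x)
    calc A * (2 * b + a) < A * (2 * b + A * b) := by gcongr; nlinarith
      _ = A * b * (2 + A) := by ring
      _ ≤ A * b * (A * A * A) := by gcongr; nlinarith
      _ = 2 ^ (2 ^ 2 * a) * b := by rw [mul_comm (2 ^ 2) a, pow_mul]; ring

lemma weight_lt_of_step {t u : Tm} (h : Step t u) : weight u < weight t := by
  induction h with
  | root hr => exact weight_lt_of_root hr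
  | addL _ ih | addR _ ih => simp only [weight]; omega
  | @appL t t' u _ ih =>
    exact Nat.mul_lt_mul_of_pos_right (Nat.pow_lt_pow_right one_lt_two ih)
      (by linarith [two_le_weight u])
  | appR _ ih => exact Nat.mul_lt_mul_of_pos_left ih (by positivity)

lemma weight_le_of_steps {t u : Tm} (h : Steps t u) : weight u ≤ weight t := by
  induction h with
  | refl => rfl
  | tail _ h ih => exact (weight_lt_of_step h).le.trans ih

lemma wellFounded_flip_step : WellFounded (flip Step) :=
  Subrelation.wf (fun h => weight_lt_of_step h) (measure weight).wf

lemma Root.steps {t u : Tm} (h : Root t u) : Steps t u := .single (.root h)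

namespace Steps

variable {a a' b b' : Tm}

lemma addL (h : Steps a a') : Steps (add a b) (add a' b) := h.lift (add · b) fun _ _ => Step.addL
lemma addR (h : Steps b b') : Steps (add a b) (add a b') := h.lift (add a ·) fun _ _ => Step.addR
lemma appL (h : Steps a a') : Steps (app a b) (app a' b) := h.lift (app · b) fun _ _ => Step.appL
lemma appR (h : Steps b b') : Steps (app a b) (app a b') := h.lift (app a ·) fun _ _ => Step.appR

end Steps

lemma normalForm_d : NormalForm d := by rintro _ ⟨⟨⟩⟩
lemma normalForm_e : NormalForm e := by rintro _ ⟨⟨⟩⟩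

lemma Root.join_step_of_add {x y u v : Tm} (hr : Root (add x y) u) (hs : Step (add x y) v) :
    Join Steps u v := by
  cases hr with
  | addE =>
    cases hs with
    | root hr' =>
      cases hr' with
      | addE | eAdd => exact ⟨_, .refl, .refl⟩
      | assoc a b => exact ⟨add a b, .refl, (Root.addE b).steps.addR⟩
    | addL h => exact ⟨_, .single h, (Root.addE _).steps⟩
    | addR h => exact absurd h (normalForm_e _)
  | eAdd =>
    cases hs with
    | root hr' => cases hr' <;> exact ⟨_, .refl, .refl⟩
    | addL h => exact absurd h (normalForm_e _)
    | addR h => exact ⟨_, .single h, (Root.eAdd _).steps⟩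
  | assoc a b =>
    cases hs with
    | root hr' =>
      cases hr' with
      | addE => exact ⟨add a b, (Root.addE b).steps.addR, .refl⟩
      | assoc => exact ⟨_, .refl, .refl⟩
    | addL h =>
      cases h with
      | root hr' =>
        cases hr' with
        | addE => exact ⟨add a y, (Root.eAdd y).steps.addR, .refl⟩
        | eAdd => exact ⟨add b y, (Root.eAdd _).steps, .refl⟩
        | assoc p q =>
          exact ⟨add p (add q (add b y)), (Root.assoc p q _).steps,
            .head (.root (.assoc p (add q b) y)) (Root.assoc q b y).steps.addR⟩
      | addL h' => exact ⟨_, Steps.addL (.single h'), (Root.assoc _ b y).steps⟩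
      | addR h' => exact ⟨_, (Steps.addL (.single h')).addR, (Root.assoc a _ y).steps⟩
    | addR h => exact ⟨_, (Steps.addR (.single h)).addR, (Root.assoc a b _).steps⟩

lemma Root.join_step_of_app {x y u v : Tm} (hr : Root (app x y) u) (hs : Step (app x y) v) :
    Join Steps u v := by
  cases hr with
  | appAdd a b =>
    cases hs with
    | root hr' => cases hr'; exact ⟨_, .refl, .refl⟩
    | appL h =>
      cases h with
      | root hr' =>
        cases hr' with
        | addE => exact ⟨app a y, (Root.appE _).steps, .refl⟩
        | eAdd => exact ⟨app b y, (Root.appE y).steps.appR, .refl⟩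
        | assoc p q =>
          exact ⟨app b (app q (app p y)), (Root.appAdd p q y).steps.appR,
            .head (.root (.appAdd p (add q b) y)) (Root.appAdd q b _).steps⟩
      | addL h' => exact ⟨_, (Steps.appL (.single h')).appR, (Root.appAdd _ b y).steps⟩
      | addR h' => exact ⟨_, Steps.appL (.single h'), (Root.appAdd a _ y).steps⟩
    | appR h => exact ⟨_, (Steps.appR (.single h)).appR, (Root.appAdd a b _).steps⟩
  | appD a =>
    cases hs with
    | root hr' => cases hr'; exact ⟨_, .refl, .refl⟩
    | appL h =>
      cases h with
      | root hr' =>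
        cases hr'
        exact ⟨y, .head (.root (.appE _)) (Root.addE y).steps, (Root.appE y).steps⟩
      | appL h' => exact absurd h' (normalForm_d _)
      | appR h' =>
        exact ⟨_, (Steps.appL (.single h')).trans (Steps.addR (.single h')).appR,
          (Root.appD _ y).steps⟩
    | appR h => exact ⟨_, (Steps.addL (.single h)).appR, (Root.appD a _).steps⟩
  | appE =>
    cases hs with
    | root hr' => cases hr'; exact ⟨_, .refl, .refl⟩
    | appL h => exact absurd h (normalForm_e _)
    | appR h => exact ⟨_, .single h, (Root.appE _).steps⟩
  | dE =>
    cases hs with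
    | root hr' => cases hr'; exact ⟨_, .refl, .refl⟩
    | appL h => exact absurd h (normalForm_d _)
    | appR h => exact absurd h (normalForm_e _)

lemma Root.join_step {t u v : Tm} (hr : Root t u) (hs : Step t v) : Join Steps u v := by
  cases t with
  | d | e => cases hr
  | add => exact hr.join_step_of_add hs
  | app => exact hr.join_step_of_app hs

lemma Step.join {t u v : Tm} (hu : Step t u) (hv : Step t v) : Join Steps u v := by
  induction hu generalizing v with
  | root hr => exact hr.join_step hv
  | @addL a a' b h ih =>
    cases hv with
    | root hr => exact symm (hr.join_step (.addL h))
    | addL h' => obtain ⟨c, hc, hc'⟩ := ih h'; exact ⟨add c b, hc.addL, hc'.addL⟩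
    | addR h' => exact ⟨_, .single (.addR h'), .single (.addL h)⟩
  | @addR a b b' h ih =>
    cases hv with
    | root hr => exact symm (hr.join_step (.addR h))
    | addL h' => exact ⟨_, .single (.addL h'), .single (.addR h)⟩
    | addR h' => obtain ⟨c, hc, hc'⟩ := ih h'; exact ⟨add a c, hc.addR, hc'.addR⟩
  | @appL a a' b h ih =>
    cases hv with
    | root hr => exact symm (hr.join_step (.appL h))
    | appL h' => obtain ⟨c, hc, hc'⟩ := ih h'; exact ⟨app c b, hc.appL, hc'.appL⟩
    | appR h' => exact ⟨_, .single (.appR h'), .single (.appL h)⟩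
  | @appR a b b' h ih =>
    cases hv with
    | root hr => exact symm (hr.join_step (.appR h))
    | appL h' => exact ⟨_, .single (.appL h'), .single (.appR h)⟩
    | appR h' => obtain ⟨c, hc, hc'⟩ := ih h'; exact ⟨app a c, hc.appR, hc'.appR⟩

lemma Steps.join {t u v : Tm} (hu : Steps t u) (hv : Steps t v) : Join Steps u v :=
  newman wellFounded_flip_step (fun _ _ _ => Step.join) hu hv

lemma TermEq.join {t u : Tm} (h : TermEq t u) : Join Steps t u :=
  (equivalence_join (r := ReflTransGen Step) fun _ _ _ => Steps.join).eqvGen_iff.1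
    (EqvGen.mono (fun _ u h => ⟨u, .single h, .refl⟩) _ _ h)

lemma exists_steps_normalForm (t : Tm) : ∃ u, Steps t u ∧ NormalForm u := by
  obtain ⟨u, htu, hmin⟩ := wellFounded_flip_step.has_min {u | Steps t u} ⟨t, .refl⟩
  exact ⟨u, htu, fun v huv => hmin v (htu.tail huv) huv⟩

noncomputable def nf (t : Tm) : Tm := (exists_steps_normalForm t).choose

lemma steps_nf (t : Tm) : Steps t (nf t) := (exists_steps_normalForm t).choose_spec.1

lemma normalForm_nf (t : Tm) : NormalForm (nf t) := (exists_steps_normalForm t).choose_spec.2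

lemma NormalForm.eq_of_steps {t u : Tm} (ht : NormalForm t) (h : Steps t u) : t = u := by
  rcases h.cases_head with rfl | ⟨v, hv, _⟩
  · rfl
  · exact absurd hv (ht v)

lemma NormalForm.nf_eq {t : Tm} (ht : NormalForm t) : nf t = t :=
  (ht.eq_of_steps (steps_nf t)).symm

lemma NormalForm.eq_of_join {t u : Tm} (ht : NormalForm t) (hu : NormalForm u)
    (h : Join Steps t u) : t = u := by
  obtain ⟨v, htv, huv⟩ := h
  rw [ht.eq_of_steps htv, hu.eq_of_steps huv]

lemma nf_eq_of_steps {t u : Tm} (h : Steps t u) : nf t = nf u :=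
  (normalForm_nf t).eq_of_join (normalForm_nf u)
    (Steps.join (steps_nf t) (h.trans (steps_nf u)))

lemma nf_eq_of_termEq {t u : Tm} (h : TermEq t u) : nf t = nf u := by
  obtain ⟨v, htv, huv⟩ := h.join
  rw [nf_eq_of_steps htv, nf_eq_of_steps huv]

lemma normalForm_add_iff {a b : Tm} : NormalForm (add a b) ↔
    NormalForm a ∧ NormalForm b ∧ a ≠ e ∧ b ≠ e ∧ ∀ p q, a ≠ add p q := by
  constructor
  · intro h
    refine ⟨fun u hu => h _ (.addL hu), fun u hu => h _ (.addR hu), ?_, ?_, ?_⟩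
    · rintro rfl; exact h _ (.root (.eAdd b))
    · rintro rfl; exact h _ (.root (.addE a))
    · rintro p q rfl; exact h _ (.root (.assoc p q b))
  · rintro ⟨ha, hb, hae, hbe, hadd⟩ u hu
    cases hu with
    | root hr => cases hr; exacts [hbe rfl, hae rfl, hadd _ _ rfl]
    | addL hu => exact ha _ hu
    | addR hu => exact hb _ hu

lemma normalForm_app_iff {a b : Tm} : NormalForm (app a b) ↔ a = d ∧ NormalForm b ∧ b ≠ e := by
  constructor
  · intro h
    induction a generalizing b with
    | d => exact ⟨rfl, fun u hu => h _ (.appR hu), by rintro rfl; exact h _ (.root .dE)⟩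
    | e => exact absurd (.root (.appE b)) (h _)
    | add p q => exact absurd (.root (.appAdd p q b)) (h _)
    | app u w ih _ =>
      obtain ⟨rfl, -⟩ := ih fun v hv => h _ (.appL hv)
      exact absurd (.root (.appD w b)) (h _)
  · rintro ⟨rfl, hb, hbe⟩ u hu
    cases hu with
    | root hr => cases hr; exact hbe rfl
    | appL hu => exact normalForm_d _ hu
    | appR hu => exact hb _ hu

lemma nf_app_e {Y : Tm} (hY : NormalForm Y) : nf (app e Y) = Y := by
  rw [nf_eq_of_steps (Root.appE Y).steps, hY.nf_eq]

lemma nf_app_d_e : nf (app d e) = e := by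
  rw [nf_eq_of_steps Root.dE.steps, normalForm_e.nf_eq]

lemma nf_app_d {Y : Tm} (hY : NormalForm Y) (hYe : Y ≠ e) : nf (app d Y) = app d Y :=
  (normalForm_app_iff.2 ⟨rfl, hY, hYe⟩).nf_eq

lemma nf_app_add (a b Y : Tm) : nf (app (add a b) Y) = nf (app b (nf (app a Y))) :=
  nf_eq_of_steps (.head (.root (.appAdd a b Y)) (steps_nf _).appR)

lemma nf_app_app_d (q Y : Tm) : nf (app (app d q) Y) = nf (app q (nf (add Y q))) :=
  nf_eq_of_steps (.head (.root (.appD q Y)) (steps_nf _).appR)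

def countD : Tm → ℕ
  | d => 1
  | e => 0
  | add x y => countD x + countD y
  | app x y => countD x + countD y

lemma ne_e_of_countD_lt {s t : Tm} (h : countD s < countD t) : t ≠ e := by
  rintro rfl; exact Nat.not_lt_zero _ h

lemma NormalForm.countD_pos {t : Tm} (ht : NormalForm t) (hte : t ≠ e) : 0 < countD t := by
  induction t with
  | d => exact Nat.one_pos
  | e => exact absurd rfl hte
  | add a b iha _ =>
    obtain ⟨ha, -, hae, -⟩ := normalForm_add_iff.1 ht
    exact Nat.add_pos_left (iha ha hae) _
  | app a b _ _ =>
    obtain ⟨rfl, -⟩ := normalForm_app_iff.1 ht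
    exact Nat.add_pos_left Nat.one_pos _

lemma countD_nf_add {Y q : Tm} (hY : NormalForm Y) (hq : NormalForm q) :
    countD (nf (add Y q)) = countD Y + countD q := by
  by_cases hqe : q = e
  · subst hqe
    rw [nf_eq_of_steps (Root.addE Y).steps, hY.nf_eq]
    rfl
  induction Y with
  | e => rw [nf_eq_of_steps (Root.eAdd q).steps, hq.nf_eq]; simp [countD]
  | add y₁ y₂ _ ih₂ =>
    obtain ⟨hy₁, hy₂, hy₁e, -, hy₁add⟩ := normalForm_add_iff.1 hY
    have hV := ih₂ hy₂
    have hVe : nf (add y₂ q) ≠ e :=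
      ne_e_of_countD_lt (s := y₂) (by rw [hV]; exact Nat.lt_add_of_pos_right (hq.countD_pos hqe))
    have hnf : NormalForm (add y₁ (nf (add y₂ q))) :=
      normalForm_add_iff.2 ⟨hy₁, normalForm_nf _, hy₁e, hVe, hy₁add⟩
    rw [nf_eq_of_steps (.head (.root (.assoc y₁ y₂ q)) (steps_nf _).addR), hnf.nf_eq]
    simp only [countD, hV]
    ring
  | d | app => rw [(normalForm_add_iff.2 ⟨hY, hq, nofun, hqe, nofun⟩).nf_eq]; rfl

lemma countD_lt_countD_nf_add {Y q : Tm} (hY : NormalForm Y) (hq : NormalForm q) (hqe : q ≠ e) :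
    countD Y < countD (nf (add Y q)) := by
  rw [countD_nf_add hY hq]
  exact Nat.lt_add_of_pos_right (hq.countD_pos hqe)

theorem nf_app_induction {P : Tm → Tm → Prop}
    (e_app : ∀ Y, NormalForm Y → P e Y)
    (d_app : ∀ Y, NormalForm Y → P d Y)
    (add_app : ∀ a b Y, NormalForm (add a b) → NormalForm Y →
      P a Y → P b (nf (app a Y)) → P (add a b) Y)
    (app_d_app : ∀ q Y, NormalForm q → q ≠ e → NormalForm Y →
      P q (nf (add Y q)) → P (app d q) Y)
    (X Y : Tm) (hX : NormalForm X) (hY : NormalForm Y) : P X Y := by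
  induction hn : weight (app X Y) using Nat.strong_induction_on generalizing X Y with
  | _ n ih =>
  subst hn
  cases X with
  | e => exact e_app Y hY
  | d => exact d_app Y hY
  | add a b =>
    obtain ⟨ha, hb, -⟩ := normalForm_add_iff.1 hX
    have hroot := weight_lt_of_root (.appAdd a b Y)
    refine add_app a b Y hX hY (ih _ ?_ a Y ha hY rfl) (ih _ ?_ b _ hb (normalForm_nf _) rfl)
    · exact (weight_lt_weight_app_right b _).trans hroot
    · exact (weight_le_of_steps (steps_nf _).appR).trans_lt hroot
  | app u q =>
    obtain ⟨rfl, hq, hqe⟩ := normalForm_app_iff.1 hX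
    refine app_d_app q Y hq hqe hY (ih _ ?_ q _ hq (normalForm_nf _) rfl)
    exact (weight_le_of_steps (steps_nf _).appR).trans_lt (weight_lt_of_root (.appD q Y))

lemma countD_lt_countD_nf_app {X Y : Tm} (hX : NormalForm X) (hY : NormalForm Y) :
    X ≠ e → Y ≠ e → countD Y < countD (nf (app X Y)) := by
  refine nf_app_induction (P := fun X Y => X ≠ e → Y ≠ e → countD Y < countD (nf (app X Y)))
    ?_ ?_ ?_ ?_ X Y hX hY
  · intro Y _ hee _
    exact absurd rfl hee
  · intro Y hY _ hYe
    rw [nf_app_d hY hYe]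
    exact Nat.lt_one_add_iff.2 le_rfl
  · intro a b Y hab _ iha ihb _ hYe
    obtain ⟨-, -, hae, hbe, -⟩ := normalForm_add_iff.1 hab
    have hW := iha hae hYe
    rw [nf_app_add]
    exact hW.trans (ihb hbe (ne_e_of_countD_lt hW))
  · intro q Y hq hqe hY ih _ _
    have hV := countD_lt_countD_nf_add hY hq hqe
    rw [nf_app_app_d]
    exact hV.trans (ih hqe (ne_e_of_countD_lt hV))

lemma nf_app_eq_self_of_eq_add {X Y : Tm} (hX : NormalForm X) (hY : NormalForm Y) :
    ∀ a b, nf (app X Y) = add a b → nf (app X Y) = Y := by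
  refine nf_app_induction
    (P := fun X Y => ∀ a b, nf (app X Y) = add a b → nf (app X Y) = Y) ?_ ?_ ?_ ?_ X Y hX hY
  · intro Y hY _ _ _
    exact nf_app_e hY
  · intro Y hY a b h
    by_cases hYe : Y = e
    · rw [hYe, nf_app_d_e] at h; cases h
    · rw [nf_app_d hY hYe] at h; cases h
  · intro a' b' Y _ _ iha ihb a b h
    rw [nf_app_add] at h ⊢
    have hW := ihb a b h
    rw [hW] at h ⊢
    exact iha a b h
  · intro q Y hq hqe hY ih a b h
    rw [nf_app_app_d] at h
    have hV := countD_lt_countD_nf_add hY hq hqe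
    have hgrow := countD_lt_countD_nf_app hq (normalForm_nf _) hqe (ne_e_of_countD_lt hV)
    rw [ih a b h] at hgrow
    exact absurd hgrow (lt_irrefl _)

lemma eq_d_or_countD_lt_of_nf_app_eq_app_d {X Y : Tm} (hX : NormalForm X)
    (hY : NormalForm Y) : X ≠ e → Y ≠ e → ∀ Z, nf (app X Y) = app d Z →
      X = d ∧ Z = Y ∨ countD Y < countD Z := by
  refine nf_app_induction (P := fun X Y => X ≠ e → Y ≠ e → ∀ Z, nf (app X Y) = app d Z →
    X = d ∧ Z = Y ∨ countD Y < countD Z) ?_ ?_ ?_ ?_ X Y hX hY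
  · intro Y _ hee _
    exact absurd rfl hee
  · intro Y hY _ hYe Z h
    rw [nf_app_d hY hYe] at h
    cases h
    exact .inl ⟨rfl, rfl⟩
  · intro a b Y hab hY _ ihb _ hYe Z h
    obtain ⟨ha, -, hae, hbe, -⟩ := normalForm_add_iff.1 hab
    have hW := countD_lt_countD_nf_app ha hY hae hYe
    rw [nf_app_add] at h
    rcases ihb hbe (ne_e_of_countD_lt hW) Z h with ⟨-, rfl⟩ | hWZ
    exacts [.inr hW, .inr (hW.trans hWZ)]
  · intro q Y hq hqe hY ih _ _ Z h
    have hV := countD_lt_countD_nf_add hY hq hqe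
    rw [nf_app_app_d] at h
    rcases ih hqe (ne_e_of_countD_lt hV) Z h with ⟨-, rfl⟩ | hVZ
    exacts [.inr hV, .inr (hV.trans hVZ)]

/-- uniqueness of quines: a normal form t with t·e ≡ t is
either e or d·d. -/
theorem quine_unique :
    ∀ t : Tm, NormalForm t → TermEq (app t e) t → t = e ∨ t = app d d := by
  intro t ht heq
  have hfix : nf (app t e) = t := by rw [nf_eq_of_termEq heq, ht.nf_eq]
  cases t with
  | e => exact .inl rfl
  | d => rw [nf_app_d_e] at hfix; cases hfix
  | add a b =>
    have hte : add a b = e := hfix.symm.trans (nf_app_eq_self_of_eq_add ht normalForm_e a b hfix)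
    cases hte
  | app u v =>
    obtain ⟨rfl, hv, hve⟩ := normalForm_app_iff.1 ht
    have hvv : nf (app v v) = app d v := by
      rw [← hfix, nf_app_app_d, nf_eq_of_steps (Root.eAdd v).steps, hv.nf_eq]
    rcases eq_d_or_countD_lt_of_nf_app_eq_app_d hv hv hve hve v hvv with ⟨rfl, -⟩ | hlt
    · exact .inr rfl
    · exact absurd hlt (lt_irrefl _)
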